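/- arXiv:2207.00729 — 2 statements merged into one kernel-verified Lean document; each statement's English description precedes it below -/
import Mathlib

section
/- Let p be an even positive integer and φ = ⟨m, e⟩ a p-precision float with e ≥ I^min_{p/2} and whose value is positive and at most the maximum p-precision representable value. Then the real value of f_p(g_p(φ)) differs from the real value of φ by a multiplicative factor of at most 1 ± 2^{−p/2 + 2}. -/
/-- The maximum value of a signed `q`-bit integer: `I^max_q = 2^q − 1`. -/
def Imax (q : ℕ) : ℤ := 2 ^ q - 1

/-- The minimum value of a signed `q`-bit integer: `I^min_q = −(2^q − 1)`. -/
def Imin (q : ℕ) : ℤ := -(2 ^ q - 1)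

/-- Bit-size of an integer: `sizeof(z) = ⌊log₂ |z|⌋ + 2` for `z ≠ 0`, and
`sizeof(0) = 2`. -/
def sizeofInt (z : ℤ) : ℕ := if z = 0 then 2 else Nat.log 2 z.natAbs + 2

/-!
Since `e ≥ I^min`, `z = g_p(φ)` is exact: `z · 2^(I^min)` is the value of `φ`. The map `f_p`
drops the last `ℓ = sizeof z − p/2` bits of `z`, and the exponent `e'` compensates exactly
for them, so `f_p(z)` has value `(z with its last ℓ bits cleared) · 2^(I^min)`.
The cleared bits are worth less than `2^ℓ ≤ 2^(log₂ z + 2 − p/2) ≤ z · 2^(2 − p/2)`.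
-/

lemma sizeofInt_natCast {n : ℕ} (hn : n ≠ 0) : sizeofInt n = Nat.log 2 n + 2 := by
  simp [sizeofInt, hn]

lemma sizeofInt_natCast_div_two_pow {n ℓ : ℕ} (hn : n ≠ 0) (hℓ : ℓ ≤ Nat.log 2 n) :
    (sizeofInt (n / 2 ^ ℓ : ℕ) : ℤ) = sizeofInt n - ℓ := by
  have hq : n / 2 ^ ℓ ≠ 0 :=
    (Nat.div_pos ((Nat.pow_le_pow_right two_pos hℓ).trans (Nat.pow_log_le_self 2 hn))
      (by positivity)).ne'
  rw [sizeofInt_natCast hn, sizeofInt_natCast hq, Nat.log_div_base_pow]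
  omega

lemma natCast_div_two_pow_mul_zpow_sizeofInt_sub (n ℓ : ℕ) :
    ((n / 2 ^ ℓ : ℕ) : ℝ) * (2 : ℝ) ^ ((sizeofInt n : ℤ) - sizeofInt (n / 2 ^ ℓ : ℕ)) =
      ((n / 2 ^ ℓ * 2 ^ ℓ : ℕ) : ℝ) := by
  rcases eq_or_ne n 0 with rfl | hn
  · simp
  rcases le_or_gt ℓ (Nat.log 2 n) with hℓ | hℓ
  · rw [sizeofInt_natCast_div_two_pow hn hℓ, sub_sub_cancel, zpow_natCast]
    push_cast
    rfl
  · have : n / 2 ^ ℓ = 0 :=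
      Nat.div_eq_of_lt ((Nat.lt_pow_succ_log_self one_lt_two n).trans_le
        (Nat.pow_le_pow_right two_pos hℓ))
    simp [this]

lemma mod_two_pow_log_add_two_sub_mul_le (n q : ℕ) :
    n % 2 ^ (Nat.log 2 n + 2 - q) * 2 ^ q ≤ 4 * n := by
  rcases le_or_gt (Nat.log 2 n + 2) q with hq | hq
  · simp [Nat.sub_eq_zero_of_le hq, Nat.mod_one]
  rcases eq_or_ne n 0 with rfl | hn
  · simp
  calc n % 2 ^ (Nat.log 2 n + 2 - q) * 2 ^ q
      ≤ 2 ^ (Nat.log 2 n + 2 - q) * 2 ^ q :=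
        Nat.mul_le_mul_right _ (Nat.mod_lt _ (by positivity)).le
    _ = 4 * 2 ^ Nat.log 2 n := by rw [← pow_add, Nat.sub_add_cancel hq.le]; ring
    _ ≤ 4 * n := Nat.mul_le_mul_left 4 (Nat.pow_log_le_self 2 hn)

lemma truncation_relative_error (n q : ℕ) :
    (n : ℝ) * (1 - (2 : ℝ) ^ ((2 : ℤ) - q)) ≤
        ((n / 2 ^ (Nat.log 2 n + 2 - q) * 2 ^ (Nat.log 2 n + 2 - q) : ℕ) : ℝ) ∧
      ((n / 2 ^ (Nat.log 2 n + 2 - q) * 2 ^ (Nat.log 2 n + 2 - q) : ℕ) : ℝ) ≤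
        (n : ℝ) * (1 + (2 : ℝ) ^ ((2 : ℤ) - q)) := by
  set ℓ := Nat.log 2 n + 2 - q
  have hsplit : ((n / 2 ^ ℓ * 2 ^ ℓ : ℕ) : ℝ) = n - (n % 2 ^ ℓ : ℕ) := by
    rw [eq_sub_iff_add_eq, ← Nat.cast_add, Nat.div_add_mod' n (2 ^ ℓ)]
  have hmod : ((n % 2 ^ ℓ : ℕ) : ℝ) ≤ n * (2 : ℝ) ^ ((2 : ℤ) - q) := by
    have h := mod_two_pow_log_add_two_sub_mul_le n q
    rw [zpow_sub₀ two_ne_zero, zpow_natCast, mul_div_assoc', le_div_iff₀ (by positivity)]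
    exact_mod_cast (by linarith : n % 2 ^ ℓ * 2 ^ q ≤ n * 2 ^ 2)
  have ht : (0 : ℝ) ≤ (2 : ℝ) ^ ((2 : ℤ) - q) := by positivity
  constructor <;> nlinarith [(Nat.cast_nonneg _ : (0 : ℝ) ≤ (n % 2 ^ ℓ : ℕ)),
    (Nat.cast_nonneg n : (0 : ℝ) ≤ n)]

lemma Int.cast_mul_two_pow_toNat_sub_mul_zpow {a e : ℤ} (m : ℤ) (hae : a ≤ e) :
    ((m * 2 ^ (e - a).toNat : ℤ) : ℝ) * (2 : ℝ) ^ a = m * (2 : ℝ) ^ e := by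
  push_cast
  rw [← zpow_natCast, Int.toNat_of_nonneg (sub_nonneg.mpr hae), mul_assoc,
    ← zpow_add₀ two_ne_zero, sub_add_cancel]

theorem truncated_roundtrip_close_general (p : ℕ)
    (m e : ℤ)
    (heI : Imin (p / 2) ≤ e)
    (hpos : 0 < (m : ℝ) * (2 : ℝ) ^ e)
    (z : ℤ) (hz : z = m * 2 ^ (e - Imin (p / 2)).toNat)
    (ℓ : ℕ) (hℓ : ℓ = sizeofInt z - p / 2)
    (m' : ℤ) (hm' : m' = z / 2 ^ ℓ)
    (e' : ℤ) (he' : e' = (sizeofInt z : ℤ) - (sizeofInt m' : ℤ) + Imin (p / 2)) :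
    (m : ℝ) * (2 : ℝ) ^ e * (1 - (2 : ℝ) ^ ((2 : ℤ) - (p : ℤ) / 2)) ≤
      (m' : ℝ) * (2 : ℝ) ^ e' ∧
    (m' : ℝ) * (2 : ℝ) ^ e' ≤
      (m : ℝ) * (2 : ℝ) ^ e * (1 + (2 : ℝ) ^ ((2 : ℤ) - (p : ℤ) / 2)) := by
  have hm : 0 < m := by exact_mod_cast pos_of_mul_pos_left hpos (by positivity)
  have hφ : (z : ℝ) * 2 ^ Imin (p / 2) = m * 2 ^ e :=
    hz ▸ Int.cast_mul_two_pow_toNat_sub_mul_zpow m heI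
  have hz_pos : 0 < z := hz ▸ by positivity
  lift z to ℕ using hz_pos.le
  rw [Int.cast_natCast] at hφ
  rw [sizeofInt_natCast (by omega)] at hℓ
  have hm'z : m' = (z / 2 ^ ℓ : ℕ) := by rw [hm']; push_cast; rfl
  have hf : (m' : ℝ) * 2 ^ e' = ((z / 2 ^ ℓ * 2 ^ ℓ : ℕ) : ℝ) * 2 ^ Imin (p / 2) := by
    rw [he', hm'z, zpow_add₀ two_ne_zero, ← mul_assoc, Int.cast_natCast,
      natCast_div_two_pow_mul_zpow_sizeofInt_sub]
  have hexp : (2 : ℤ) - (p : ℤ) / 2 = 2 - ((p / 2 : ℕ) : ℤ) := by omega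
  obtain ⟨hlo, hhi⟩ := truncation_relative_error z (p / 2)
  rw [← hℓ] at hlo hhi
  rw [hf, ← hφ, hexp]
  exact ⟨by rw [mul_right_comm]; gcongr, by rw [mul_right_comm]; gcongr⟩

/-- Let `p` be even and positive and `φ = ⟨m, e⟩` a
`p`-precision float with `e ≥ I^min_{p/2}` whose value is positive and at
most `F^max_p = I^max_{p/2} · 2^{I^max_{p/2}}`. With `z = g_p(φ)`,
`ℓ = max{0, sizeof(z) − p/2}`, `m' = ⌊z / 2^ℓ⌋`, and
`e' = sizeof(z) − sizeof(m') + I^min_{p/2}`, assuming no overflow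
(`e' ≤ I^max_{p/2}`), the value `m' · 2^{e'}` of `f_p(g_p(φ))` differs from
the value `m · 2^e` of `φ` by a multiplicative factor of at most
`1 ± 2^{−p/2 + 2}`. -/
theorem truncated_roundtrip_close (p : ℕ) (hp : 0 < p) (hpe : Even p)
    (m e : ℤ) (hm : |m| ≤ Imax (p / 2)) (he : |e| ≤ Imax (p / 2))
    (heI : Imin (p / 2) ≤ e)
    (hpos : 0 < (m : ℝ) * (2 : ℝ) ^ e)
    (hmaxval : (m : ℝ) * (2 : ℝ) ^ e ≤
      ((Imax (p / 2) : ℝ)) * (2 : ℝ) ^ (Imax (p / 2)))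
    (z : ℤ) (hz : z = m * 2 ^ (e - Imin (p / 2)).toNat)
    (ℓ : ℕ) (hℓ : ℓ = sizeofInt z - p / 2)
    (m' : ℤ) (hm' : m' = z / 2 ^ ℓ)
    (e' : ℤ) (he' : e' = (sizeofInt z : ℤ) - (sizeofInt m' : ℤ) + Imin (p / 2))
    (hoverflow : e' ≤ Imax (p / 2)) :
    (m : ℝ) * (2 : ℝ) ^ e * (1 - (2 : ℝ) ^ ((2 : ℤ) - (p : ℤ) / 2)) ≤
      (m' : ℝ) * (2 : ℝ) ^ e' ∧
    (m' : ℝ) * (2 : ℝ) ^ e' ≤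
      (m : ℝ) * (2 : ℝ) ^ e * (1 + (2 : ℝ) ^ ((2 : ℤ) - (p : ℤ) / 2)) :=
  truncated_roundtrip_close_general p m e heI hpos z hz ℓ hℓ m' hm' e' he'
end

section
/- Let z_1, …, z_n be integers with |z_i| < 2^p for all i, and let S = Σ_{i=1}^n z_i. Suppose each z_i is the integer mapping g_p(φ_i) of a p-precision float, and let p be even with n ≥ 2 and p ≥ 4. If the truncated float f_p(S) does not overflow and the exact real sum Σ_i (value of φ_i) is positive, then the float sum ⊕_{i=1}^n φ_i = f_p(Σ_i g_p(φ_i)) has value within a multiplicative factor 1 ± 2^{−p/2+2} of the exact real sum Σ_i (value of φ_i). -/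
/-- Let `φ_1, …, φ_n` be `p`-precision floats (`n ≥ 2`,
`p ≥ 4`, `p` even) with integer mappings `z_i = g_p(φ_i)` satisfying
`|z_i| < 2^p`, and let `S = Σ_i z_i`. If the truncated float
`f_p(S) = ⟨m', e'⟩` does not overflow, then the value of the iterated float
sum `⊕_i φ_i = f_p(Σ_i g_p(φ_i))` is within a multiplicative factor
`1 ± 2^{−p/2+2}` of the exact real sum `Σ_i (value of φ_i) = S · 2^{I^min}`,
provided the exact sum is positive. -/
theorem float_sum_accuracy (n p : ℕ) (hn : 2 ≤ n) (hp : 4 ≤ p)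
    (hpe : Even p)
    (m e : Fin n → ℤ)
    (hm : ∀ i, |m i| ≤ Imax (p / 2)) (he : ∀ i, |e i| ≤ Imax (p / 2))
    (z : Fin n → ℤ)
    (hz : ∀ i, z i = m i * 2 ^ (e i - Imin (p / 2)).toNat)
    (hzp : ∀ i, |z i| < 2 ^ p)
    (S : ℤ) (hS : S = ∑ i, z i)
    (hpos : 0 < (S : ℝ) * (2 : ℝ) ^ Imin (p / 2))
    (ℓ : ℕ) (hℓ : ℓ = sizeofInt S - p / 2)
    (m' : ℤ) (hm' : m' = S / 2 ^ ℓ)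
    (e' : ℤ) (he' : e' = (sizeofInt S : ℤ) - (sizeofInt m' : ℤ) + Imin (p / 2))
    (hoverflow : e' ≤ Imax (p / 2)) :
    (S : ℝ) * (2 : ℝ) ^ Imin (p / 2) *
        (1 - (2 : ℝ) ^ ((2 : ℤ) - (p : ℤ) / 2)) ≤
      (m' : ℝ) * (2 : ℝ) ^ e' ∧
    (m' : ℝ) * (2 : ℝ) ^ e' ≤
      (S : ℝ) * (2 : ℝ) ^ Imin (p / 2) *
        (1 + (2 : ℝ) ^ ((2 : ℤ) - (p : ℤ) / 2)) := by
  set q : ℕ := p / 2 with hqdef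
  have hq2 : 2 ≤ q := by
    obtain ⟨k, hk⟩ := hpe; omega
  have hpq : (p : ℤ) / 2 = (q : ℤ) := by
    obtain ⟨k, hk⟩ := hpe; omega
  rw [hpq]
  set I : ℤ := Imin q with hIdef
  have hX : (0 : ℝ) < (2 : ℝ) ^ I := by positivity
  have hSR : (0 : ℝ) < (S : ℝ) := by
    by_contra h
    push_neg at h
    nlinarith
  have hS0 : 0 < S := by exact_mod_cast hSR
  have hε : (0 : ℝ) < (2 : ℝ) ^ ((2 : ℤ) - (q : ℤ)) := by positivity
  -- N = natural version of S
  set N : ℕ := S.natAbs with hNdef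
  have hN : (N : ℤ) = S := Int.natAbs_of_nonneg hS0.le
  have hN1 : 1 ≤ N := by omega
  set L : ℕ := Nat.log 2 N with hLdef
  have hsize : sizeofInt S = L + 2 := by
    simp [sizeofInt, hS0.ne', hNdef, hLdef]
  have h2L : 2 ^ L ≤ N := Nat.pow_log_le_self 2 (by omega)
  have hN2 : N < 2 ^ (L + 1) := Nat.lt_pow_succ_log_self (by norm_num) N
  by_cases hl0 : ℓ = 0
  · -- no truncation
    subst hl0
    have hmS : m' = S := by simpa using hm'
    have hsm : sizeofInt m' = sizeofInt S := by rw [hmS]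
    have heI : e' = I := by rw [he', hsm]; ring
    rw [hmS, heI]
    constructor
    · nlinarith
    · nlinarith
  · -- truncation: ℓ > 0
    have hqL : q < L + 2 := by
      by_contra h
      push_neg at h
      rw [hℓ, hsize] at hl0
      omega
    have hℓeq : ℓ = L + 2 - q := by rw [hℓ, hsize]
    have hℓL : ℓ ≤ L := by omega
    have hℓq : ℓ + (q - 2) = L := by omega
    -- the natural-number mantissa
    set M : ℕ := N / 2 ^ ℓ with hMdef
    have hmM : m' = (M : ℤ) := by
      rw [hm', ← hN, hMdef]
      push_cast [Int.natCast_div]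
      norm_num
    have hMlow : 2 ^ (L - ℓ) ≤ M := by
      rw [hMdef, Nat.le_div_iff_mul_le (by positivity), ← pow_add]
      have : L - ℓ + ℓ = L := by omega
      rw [this]; exact h2L
    have hMhigh : M < 2 ^ (L - ℓ + 1) := by
      rw [hMdef, Nat.div_lt_iff_lt_mul (by positivity), ← pow_add]
      have : L - ℓ + 1 + ℓ = L + 1 := by omega
      rw [this]; exact hN2
    have hM0 : M ≠ 0 := by
      have := hMlow; have := Nat.one_le_two_pow (n := L - ℓ); omega
    have hMlog : Nat.log 2 M = L - ℓ :=
      Nat.log_eq_of_pow_le_of_lt_pow hMlow hMhigh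
    have hsm : sizeofInt m' = L - ℓ + 2 := by
      rw [hmM]
      simp [sizeofInt, hM0, hMlog]
    have heI : e' = (ℓ : ℤ) + I := by
      rw [he', hsm, hsize]
      push_cast [Nat.cast_sub hℓL]
      ring
    -- division with remainder
    set r : ℕ := N % 2 ^ ℓ with hrdef
    have hdm : N = 2 ^ ℓ * M + r := (Nat.div_add_mod N (2 ^ ℓ)).symm
    have hrlt : r < 2 ^ ℓ := Nat.mod_lt _ (by positivity)
    -- key inequality: r * 2^(q-2) ≤ N
    have hkey : r * 2 ^ (q - 2) ≤ N := by
      have h1 : r * 2 ^ (q - 2) < 2 ^ ℓ * 2 ^ (q - 2) :=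
        mul_lt_mul_of_pos_right hrlt (by positivity)
      rw [← pow_add, hℓq] at h1
      omega
    -- pass to the reals
    rw [hmM, heI, zpow_add₀ (by norm_num : (2:ℝ) ≠ 0), zpow_natCast]
    have hNr : (N : ℝ) = (S : ℝ) := by exact_mod_cast hN
    have hdmR : (N : ℝ) = 2 ^ ℓ * (M : ℝ) + (r : ℝ) := by exact_mod_cast hdm
    have hkeyR : (r : ℝ) * 2 ^ (q - 2) ≤ (N : ℝ) := by exact_mod_cast hkey
    have hεinv : (2 : ℝ) ^ ((2 : ℤ) - (q : ℤ)) * 2 ^ (q - 2) = 1 := by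
      rw [← zpow_natCast (2 : ℝ) (q - 2), ← zpow_add₀ (by norm_num : (2:ℝ) ≠ 0)]
      have : (2 : ℤ) - (q : ℤ) + ((q - 2 : ℕ) : ℤ) = 0 := by
        push_cast [Nat.cast_sub hq2]; ring
      rw [this, zpow_zero]
    have hrN : (0 : ℝ) ≤ (r : ℝ) := by positivity
    have hεbound : (r : ℝ) ≤ (N : ℝ) * (2 : ℝ) ^ ((2 : ℤ) - (q : ℤ)) := by
      have h2q : (0 : ℝ) < (2 : ℝ) ^ (q - 2) := by positivity
      nlinarith [hkeyR, hε]
    rw [hNr] at hdmR hεbound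
    have hmain : (S : ℝ) * (1 - (2 : ℝ) ^ ((2 : ℤ) - (q : ℤ))) ≤ (M : ℝ) * 2 ^ ℓ := by
      have := hεbound
      linarith [hεbound, hdmR]
    have hBle : (M : ℝ) * 2 ^ ℓ ≤ (S : ℝ) := by linarith [hdmR, hrN]
    constructor
    · calc (S : ℝ) * (2:ℝ) ^ I * (1 - (2 : ℝ) ^ ((2 : ℤ) - (q : ℤ)))
          = ((S : ℝ) * (1 - (2 : ℝ) ^ ((2 : ℤ) - (q : ℤ)))) * (2:ℝ) ^ I := by ring
        _ ≤ ((M : ℝ) * 2 ^ ℓ) * (2:ℝ) ^ I := mul_le_mul_of_nonneg_right hmain hX.le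
        _ = (M : ℝ) * (2 ^ ℓ * (2:ℝ) ^ I) := by ring
    · calc (M : ℝ) * (2 ^ ℓ * (2:ℝ) ^ I)
          = ((M : ℝ) * 2 ^ ℓ) * (2:ℝ) ^ I := by ring
        _ ≤ (S : ℝ) * (2:ℝ) ^ I := mul_le_mul_of_nonneg_right hBle hX.le
        _ ≤ (S : ℝ) * (2:ℝ) ^ I * (1 + (2 : ℝ) ^ ((2 : ℤ) - (q : ℤ))) :=
            le_mul_of_one_le_right (by positivity) (by linarith)
end
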